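/- arXiv:2207.09757 — 2 statements merged into one kernel-verified Lean document; each statement's English description precedes it below -/
import Mathlib

section
/- Let $\gamma' \geq 0$ be a real number and let $(\lambda_i)_{i \ge 0}$ be any sequence of real numbers. Then there exists a unique doubly-indexed family of real numbers $(C_{ij})_{i \ge 0,\, 0 \le j \le i}$ such that for every $i \ge 0$, $\sum_{j=0}^{i} C_{ij} = -\dfrac{\lambda_i}{2(2i+1)}$, and for every $i \ge 1$ and $0 \le j \le i-1$, $(j+1)(j+1-\gamma')\,C_{i(j+1)} - (i-j)(i-j+\gamma')\,C_{ij} = \sum_{k=j}^{i-1} C_{kj}\,\lambda_{i-1-k}$. -/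
/-!
The system is triangular in the row index: row `i` sees the earlier rows only through the
right-hand side of its recurrence, so it suffices to solve one row at a time. Within row `i`
the coefficient `(i - j) (i - j + γ)` of `C i j` is positive, so the recurrence determines the
row downwards from the diagonal entry `C i i = t`, affinely in `t`. With falling factorials
`(x)_d` and rising factorials `x^(d)`, the slope of the row sum in `t` is
`∑_d (i choose d) (i - γ)_d / (γ + 1)^(d)`, a terminating `₂F₁` at `1`; by Chu–Vandermonde
it equals `(2i)_i / (γ + 1)^(i) > 0`, so the sum condition fixes `t` uniquely.
-/

open Finset Polynomial

theorem existsUnique_strongRec {α : Type*} [Nonempty α] (P : ℕ → (ℕ → α) → α → Prop)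
    (hP : ∀ i f g a, (∀ k < i, f k = g k) → P i f a → P i g a)
    (h : ∀ i f, ∃! a, P i f a) : ∃! C : ℕ → α, ∀ i, P i C (C i) := by
  classical
  let C : ℕ → α := Nat.strongRec fun i C' =>
    (h i fun k => if hk : k < i then C' k hk else Classical.arbitrary α).exists.choose
  have hC : ∀ i, P i C (C i) := by
    intro i
    have hCi : C i =
        (h i fun k => if hk : k < i then C k else Classical.arbitrary α).exists.choose :=
      Nat.strongRec_eq _ i
    exact hP i _ C _ (fun k hk => dif_pos hk) (hCi ▸ (h i _).exists.choose_spec)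
  refine ⟨C, hC, fun D hD => funext fun i => ?_⟩
  induction i using Nat.strong_induction_on with
  | _ i ih => exact (h i C).unique (hP i D C (D i) ih (hD i)) (hC i)

theorem descPochhammer_smeval_eq_eval {R : Type*} [CommRing R] (r : R) (n : ℕ) :
    (descPochhammer ℤ n).smeval r = (descPochhammer R n).eval r := by
  rw [← aeval_eq_smeval, aeval_def, eval₂_eq_eval_map, descPochhammer_map]

theorem descPochhammer_eval_add {R : Type*} [CommRing R] (r s : R) (n : ℕ) :
    (descPochhammer R n).eval (r + s) = ∑ d ∈ range (n + 1),
      n.choose d * ((descPochhammer R d).eval r * (descPochhammer R (n - d)).eval s) := by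
  simp only [← descPochhammer_smeval_eq_eval, Ring.descPochhammer_smeval_add n (Commute.all r s),
    Nat.sum_antidiagonal_eq_sum_range_succ_mk]

/-- `backSolve γ i R t d` is the entry `x (i - d)` of the solution of the row recurrence
with `x i = t`, obtained by solving the recurrence downwards from the diagonal. -/
noncomputable def backSolve (γ : ℝ) (i : ℕ) (R : ℕ → ℝ) (t : ℝ) : ℕ → ℝ
  | 0 => t
  | d + 1 => (((i : ℝ) - d) * ((i : ℝ) - d - γ) * backSolve γ i R t d - R (i - (d + 1))) /
      (((d : ℝ) + 1) * ((d : ℝ) + 1 + γ))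

section backSolve

variable {γ : ℝ} {i : ℕ} {R : ℕ → ℝ} {t : ℝ}

theorem backSolve_succ_mul (hγ : 0 ≤ γ) (d : ℕ) :
    ((d : ℝ) + 1) * ((d : ℝ) + 1 + γ) * backSolve γ i R t (d + 1) =
      ((i : ℝ) - d) * ((i : ℝ) - d - γ) * backSolve γ i R t d - R (i - (d + 1)) := by
  rw [backSolve]
  field_simp

theorem backSolve_eq_add (γ : ℝ) (i : ℕ) (R : ℕ → ℝ) (t : ℝ) (d : ℕ) :
    backSolve γ i R t d = backSolve γ i 0 1 d * t + backSolve γ i R 0 d := by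
  induction d with
  | zero => simp [backSolve]
  | succ d ih =>
    simp only [backSolve, ih, Pi.zero_apply]
    ring

theorem backSolve_zero_one_mul_descPochhammer (hγ : 0 ≤ γ) {d : ℕ} (hd : d ≤ i) :
    backSolve γ i 0 1 d * (descPochhammer ℝ i).eval (γ + i) =
      i.choose d * (descPochhammer ℝ d).eval (i - γ) *
        (descPochhammer ℝ (i - d)).eval (γ + i) := by
  induction d with
  | zero => simp [backSolve]
  | succ d ih =>
    obtain ⟨e, he⟩ : ∃ e, i - d = e + 1 := ⟨i - (d + 1), by omega⟩
    have hchoose : (i.choose (d + 1) : ℝ) * (d + 1) = i.choose d * (i - d) := by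
      rw [← Nat.cast_sub (by omega), ← Nat.cast_succ, ← Nat.cast_mul, ← Nat.cast_mul,
        Nat.choose_succ_right_eq]
    have he' : (e : ℝ) = i - d - 1 := by
      rw [show e = i - (d + 1) by omega, Nat.cast_sub hd]
      push_cast
      ring
    have hden : ((d : ℝ) + 1) * ((d : ℝ) + 1 + γ) ≠ 0 := by positivity
    rw [he, descPochhammer_succ_eval] at ih
    rw [show i - (d + 1) = e by omega, descPochhammer_succ_eval]
    have hrec := backSolve_succ_mul (i := i) (R := 0) (t := 1) hγ d
    rw [Pi.zero_apply, sub_zero] at hrec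
    refine mul_left_cancel₀ hden ?_
    have ih := ih (by omega)
    rw [he'] at ih
    linear_combination (descPochhammer ℝ i).eval (γ + i) * hrec +
      ((i : ℝ) - d) * ((i : ℝ) - d - γ) * ih -
      ((i : ℝ) - d - γ) * (d + 1 + γ) * (descPochhammer ℝ d).eval (i - γ) *
        (descPochhammer ℝ e).eval (γ + i) * hchoose

theorem sum_backSolve_zero_one_pos (hγ : 0 ≤ γ) :
    0 < ∑ d ∈ range (i + 1), backSolve γ i 0 1 d := by
  have hD : 0 < (descPochhammer ℝ i).eval (γ + i) := descPochhammer_pos (by linarith)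
  have hsum : (∑ d ∈ range (i + 1), backSolve γ i 0 1 d) * (descPochhammer ℝ i).eval (γ + i) =
      (2 * i).descFactorial i := by
    calc (∑ d ∈ range (i + 1), backSolve γ i 0 1 d) * (descPochhammer ℝ i).eval (γ + i)
        = ∑ d ∈ range (i + 1), i.choose d * ((descPochhammer ℝ d).eval (i - γ) *
            (descPochhammer ℝ (i - d)).eval (γ + i)) := by
          rw [sum_mul]
          refine sum_congr rfl fun d hd => ?_
          rw [backSolve_zero_one_mul_descPochhammer hγ (Nat.lt_succ_iff.mp (mem_range.mp hd)),
            mul_assoc]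
      _ = (descPochhammer ℝ i).eval (((2 * i : ℕ) : ℝ)) := by
          rw [← descPochhammer_eval_add]; push_cast; ring_nf
      _ = (2 * i).descFactorial i := descPochhammer_eval_eq_descFactorial ℝ _ _
  refine (mul_pos_iff_of_pos_right hD).mp ?_
  rw [hsum]
  exact_mod_cast Nat.descFactorial_pos.mpr (by omega)

def SolvesRowRecurrence (γ : ℝ) (i : ℕ) (R : ℕ → ℝ) (x : ℕ → ℝ) : Prop :=
  ∀ j < i, ((j : ℝ) + 1) * ((j : ℝ) + 1 - γ) * x (j + 1) -
    ((i : ℝ) - (j : ℝ)) * ((i : ℝ) - (j : ℝ) + γ) * x j = R j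

noncomputable def backSolveRow (γ : ℝ) (i : ℕ) (R : ℕ → ℝ) (t : ℝ) (j : ℕ) : ℝ :=
  if j ≤ i then backSolve γ i R t (i - j) else 0

theorem solvesRowRecurrence_backSolveRow (hγ : 0 ≤ γ) :
    SolvesRowRecurrence γ i R (backSolveRow γ i R t) := by
  intro j hj
  obtain ⟨d, rfl⟩ : ∃ d, i = j + 1 + d := ⟨i - (j + 1), by omega⟩
  have hrec := backSolve_succ_mul (i := j + 1 + d) (R := R) (t := t) hγ d
  rw [show j + 1 + d - (d + 1) = j by omega] at hrec
  rw [backSolveRow, backSolveRow, if_pos (by omega), if_pos (by omega),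
    show j + 1 + d - (j + 1) = d by omega, show j + 1 + d - j = d + 1 by omega]
  push_cast at hrec ⊢
  linear_combination -hrec

theorem eq_backSolveRow_of_solvesRowRecurrence (hγ : 0 ≤ γ) {x : ℕ → ℝ}
    (hx : SolvesRowRecurrence γ i R x) (hzero : ∀ j, i < j → x j = 0) :
    x = backSolveRow γ i R (x i) := by
  have hback : ∀ d ≤ i, x (i - d) = backSolve γ i R (x i) d := by
    intro d hd
    induction d with
    | zero => rfl
    | succ d ih =>
      have hrec := hx (i - (d + 1)) (by omega)
      rw [show i - (d + 1) + 1 = i - d by omega, ih (by omega)] at hrec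
      push_cast [Nat.cast_sub hd] at hrec
      have hden : ((d : ℝ) + 1) * ((d : ℝ) + 1 + γ) ≠ 0 := by positivity
      refine mul_left_cancel₀ hden ?_
      linear_combination -backSolve_succ_mul (i := i) (R := R) (t := x i) hγ d - hrec
  funext j
  by_cases hj : j ≤ i
  · rw [backSolveRow, if_pos hj, ← hback (i - j) (by omega), Nat.sub_sub_self hj]
  · rw [backSolveRow, if_neg hj, hzero j (by omega)]

theorem sum_backSolveRow (γ : ℝ) (i : ℕ) (R : ℕ → ℝ) (t : ℝ) :
    ∑ j ∈ range (i + 1), backSolveRow γ i R t j =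
      (∑ d ∈ range (i + 1), backSolve γ i 0 1 d) * t +
        ∑ d ∈ range (i + 1), backSolve γ i R 0 d := by
  rw [← sum_range_reflect, sum_mul, ← sum_add_distrib]
  refine sum_congr rfl fun d hd => ?_
  have hd : d ≤ i := Nat.lt_succ_iff.mp (mem_range.mp hd)
  rw [backSolveRow, if_pos (by omega), show i - (i + 1 - 1 - d) = d by omega, backSolve_eq_add]

end backSolve

def IsKernelRow (γ : ℝ) (i : ℕ) (R : ℕ → ℝ) (s : ℝ) (x : ℕ → ℝ) : Prop :=
  (∀ j, i < j → x j = 0) ∧ ∑ j ∈ range (i + 1), x j = s ∧ SolvesRowRecurrence γ i R x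

theorem IsKernelRow.congr_rhs {γ : ℝ} {i : ℕ} {R R' : ℕ → ℝ} {s : ℝ} {x : ℕ → ℝ}
    (hR : ∀ j < i, R j = R' j) (hx : IsKernelRow γ i R s x) : IsKernelRow γ i R' s x :=
  ⟨hx.1, hx.2.1, fun j hj => hR j hj ▸ hx.2.2 j hj⟩

theorem existsUnique_isKernelRow {γ : ℝ} (hγ : 0 ≤ γ) (i : ℕ) (R : ℕ → ℝ) (s : ℝ) :
    ∃! x, IsKernelRow γ i R s x := by
  set A := ∑ d ∈ range (i + 1), backSolve γ i 0 1 d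
  set B := ∑ d ∈ range (i + 1), backSolve γ i R 0 d
  have hA : A ≠ 0 := (sum_backSolve_zero_one_pos hγ).ne'
  refine ⟨backSolveRow γ i R ((s - B) / A), ⟨fun j hj => if_neg (by omega), ?_,
    solvesRowRecurrence_backSolveRow hγ⟩, ?_⟩
  · rw [sum_backSolveRow]
    field_simp
    ring
  · rintro y ⟨hzero, hsum, hrec⟩
    have hy := eq_backSolveRow_of_solvesRowRecurrence hγ hrec hzero
    rw [hy, sum_backSolveRow] at hsum
    rw [hy, ← hsum]
    congr 1
    field_simp
    ring

theorem kernel_series_coefficients_exist_unique (γ : ℝ) (hγ : 0 ≤ γ) (lam : ℕ → ℝ) :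
    ∃! C : ℕ → ℕ → ℝ,
      (∀ i j, i < j → C i j = 0) ∧
      (∀ i : ℕ, ∑ j ∈ Finset.range (i + 1), C i j = -lam i / (2 * (2 * (i : ℝ) + 1))) ∧
      (∀ i : ℕ, 1 ≤ i → ∀ j : ℕ, j ≤ i - 1 →
        ((j : ℝ) + 1) * ((j : ℝ) + 1 - γ) * C i (j + 1) -
            ((i : ℝ) - (j : ℝ)) * ((i : ℝ) - (j : ℝ) + γ) * C i j =
          ∑ k ∈ Finset.Icc j (i - 1), C k j * lam (i - 1 - k)) := by
  let rhs (C : ℕ → ℕ → ℝ) (i j : ℕ) : ℝ := ∑ k ∈ Icc j (i - 1), C k j * lam (i - 1 - k)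
  have hlocal : ∀ i (C D : ℕ → ℕ → ℝ), (∀ k < i, C k = D k) → ∀ j < i, rhs C i j = rhs D i j :=
    fun i C D h j _ => sum_congr rfl fun k hk => by
      rw [h k (by have := (mem_Icc.mp hk).2; omega)]
  have key := existsUnique_strongRec
    (fun i C x => IsKernelRow γ i (rhs C i) (-lam i / (2 * (2 * (i : ℝ) + 1))) x)
    (fun i C D x h => IsKernelRow.congr_rhs (hlocal i C D h))
    (fun i C => existsUnique_isKernelRow hγ i _ _)
  refine (existsUnique_congr fun C => ?_).mp key
  simp only [IsKernelRow, SolvesRowRecurrence, forall_and]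
  refine and_congr_right fun _ => and_congr_right fun _ =>
    ⟨fun h i _ j hj => h i j (by omega), fun h i j hj => h i (by omega) j (by omega)⟩
end

section
/- Let $\gamma' > 0$ be a real number that is not an integer and let $i \geq 0$ be an integer. Define $L_{i0} = 1$ and, for $1 \le j \le i$, $L_{ij} = \binom{i}{j} \dfrac{\prod_{k=0}^{j-1}(i+\gamma'-k)}{\prod_{k=1}^{j}(k-\gamma')}$. Then $\sum_{j=0}^{i} L_{ij} = \dfrac{(2i)!}{i!}\,\dfrac{\Gamma(1-\gamma')}{\Gamma(1-\gamma'+i)}$. -/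
open Finset

noncomputable def ff (x : ℝ) (j : ℕ) : ℝ := ∏ k ∈ Finset.range j, (x - k)

lemma ff_succ (x : ℝ) (j : ℕ) : ff x (j+1) = ff x j * (x - j) := by
  simp [ff, Finset.prod_range_succ]

/-- Vandermonde for falling factorials. -/
lemma vdm (i : ℕ) (x y : ℝ) :
    ∑ j ∈ Finset.range (i+1), (i.choose j : ℝ) * ff x j * ff y (i - j) = ff (x + y) i := by
  induction i generalizing x y with
  | zero => simp [ff]
  | succ i ih =>
    rw [Finset.sum_range_succ' (fun j => ((i+1).choose j : ℝ) * ff x j * ff y (i+1-j))]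
    have h0 : ((i+1).choose 0 : ℝ) * ff x 0 * ff y (i+1-0) = ff y i * (y - i) := by
      simp [ff_succ, ff]; rw [Finset.prod_range_succ]
    rw [h0]
    have h1 : ∀ j ∈ Finset.range (i+1),
        (((i+1).choose (j+1) : ℕ) : ℝ) * ff x (j+1) * ff y (i+1-(j+1))
        = (i.choose j : ℝ) * ff x j * ff y (i - j) * (x - j)
          + (i.choose (j+1) : ℝ) * ff x (j+1) * ff y (i - j) := by
      intro j hj
      rw [Nat.choose_succ_succ]
      push_cast [Nat.succ_eq_add_one]
      rw [ff_succ]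
      ring
    rw [Finset.sum_congr rfl h1, Finset.sum_add_distrib]
    have h2 : ∑ j ∈ Finset.range (i+1), (i.choose (j+1) : ℝ) * ff x (j+1) * ff y (i - j)
        = ∑ j ∈ Finset.range (i+1), (i.choose j : ℝ) * ff x j * ff y (i - j) * (y - (i - j : ℕ))
          - ff y i * (y - i) := by
      have e1 : ∑ j ∈ Finset.range (i+1), (i.choose j : ℝ) * ff x j * ff y (i - j) * (y - (i-j : ℕ))
          = ∑ j ∈ Finset.range (i+1), (i.choose j : ℝ) * ff x j * ff y (i + 1 - j) := by
        refine Finset.sum_congr rfl fun j hj => ?_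
        have hji : j ≤ i := by simpa [Nat.lt_succ_iff] using hj
        have h : i + 1 - j = (i - j) + 1 := by omega
        rw [h, ff_succ]; ring
      rw [e1, Finset.sum_range_succ' (fun j => (i.choose j : ℝ) * ff x j * ff y (i+1-j)),
        Finset.sum_range_succ (fun j => (i.choose (j+1) : ℝ) * ff x (j+1) * ff y (i - j))]
      simp only [Nat.choose_succ_self, Nat.cast_zero, zero_mul, add_zero,
        Nat.choose_zero_right, Nat.cast_one, one_mul, Nat.sub_zero, Nat.sub_self]
      rw [ff_succ]
      have hz : ∀ k ∈ Finset.range i,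
          (i.choose (k+1) : ℝ) * ff x (k+1) * ff y (i - k)
          = (i.choose (k+1) : ℝ) * ff x (k+1) * ff y (i+1-(k+1)) := by
        intro k hk; congr 2; omega
      rw [Finset.sum_congr rfl hz]
      simp [ff]
    rw [h2]
    have hsum : ∑ j ∈ Finset.range (i+1), (i.choose j : ℝ) * ff x j * ff y (i - j) * (x - j)
        + ∑ j ∈ Finset.range (i+1), (i.choose j : ℝ) * ff x j * ff y (i - j) * (y - (i-j:ℕ))
        = ∑ j ∈ Finset.range (i+1), (i.choose j : ℝ) * ff x j * ff y (i - j) * (x + y - i) := by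
      rw [← Finset.sum_add_distrib]
      refine Finset.sum_congr rfl fun j hj => ?_
      have hji : j ≤ i := by simpa [Nat.lt_succ_iff] using hj
      have h : ((i - j : ℕ) : ℝ) = (i : ℝ) - j := by
        rw [Nat.cast_sub hji]
      rw [h]; ring
    have hfin : ∑ j ∈ Finset.range (i+1), (i.choose j : ℝ) * ff x j * ff y (i - j) * (x + y - i)
        = ff (x + y) (i+1) := by
      rw [← Finset.sum_mul, ih, ff_succ]
    linarith

lemma ff_fact (n : ℕ) : ∀ i ≤ n, ((n-i).factorial : ℝ) * ff (n : ℝ) i = (n.factorial : ℝ) := by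
  intro i
  induction i with
  | zero => simp [ff]
  | succ i ih =>
    intro hin
    have hi : i ≤ n := by omega
    rw [ff_succ]
    have h1 : ((n - i : ℕ) : ℝ) = (n : ℝ) - i := by
      rw [Nat.cast_sub hi]
    have h2 : (n - i).factorial = (n - i) * (n - (i+1)).factorial := by
      have : n - i = (n - (i+1)) + 1 := by omega
      rw [this, Nat.factorial_succ]
    have := ih hi
    rw [h2] at this
    push_cast at this ⊢
    rw [← h1]
    push_cast
    nlinarith [this]

lemma ff_Ioc (γ : ℝ) (i : ℕ) : ∀ m ≤ i, ff ((i : ℝ) - γ) m = ∏ k ∈ Finset.Ioc (i - m) i, ((k : ℝ) - γ) := by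
  intro m
  induction m with
  | zero => simp [ff]
  | succ m ih =>
    intro hmi
    have hm : m ≤ i := by omega
    rw [ff_succ, ih hm]
    have h1 : Finset.Ioc (i - (m+1)) i = insert (i - m) (Finset.Ioc (i - m) i) := by
      ext k
      simp only [Finset.mem_Ioc, Finset.mem_insert]
      omega
    rw [h1, Finset.prod_insert (by simp)]
    have h2 : ((i - m : ℕ) : ℝ) = (i : ℝ) - m := by rw [Nat.cast_sub hm]
    rw [h2]
    ring

lemma gamma_prod (γ : ℝ) (hγnotint : ∀ n : ℤ, γ ≠ (n : ℝ)) (i : ℕ) :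
    Real.Gamma (1 - γ + (i : ℝ)) = Real.Gamma (1 - γ) * ∏ k ∈ Finset.Icc 1 i, ((k : ℝ) - γ) := by
  induction i with
  | zero => simp
  | succ i ih =>
    have hne : 1 - γ + (i : ℝ) ≠ 0 := by
      intro h
      exact hγnotint (i + 1) (by push_cast; linarith)
    have : 1 - γ + ((i : ℕ) + 1 : ℝ) = (1 - γ + i) + 1 := by ring
    push_cast
    rw [this, Real.Gamma_add_one hne, ih,
      Finset.prod_Icc_succ_top (Nat.one_le_iff_ne_zero.mpr (Nat.succ_ne_zero i))]
    push_cast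
    ring


/-- The regularizing coefficients `L_{ij}` (odd-dimension case):
`L_{i0} = 1` and for `j ≥ 1`,
`L_{ij} = binom(i,j) ⬝ (∏_{k=0}^{j-1} (i+γ'-k)) / (∏_{k=1}^{j} (k-γ'))`.
(For `j = 0` both products are empty, yielding `1`.) -/
noncomputable def Lcoef (γ : ℝ) (i j : ℕ) : ℝ :=
  (i.choose j : ℝ) * (∏ k ∈ Finset.range j, ((i : ℝ) + γ - (k : ℝ))) /
    ∏ k ∈ Finset.Icc 1 j, ((k : ℝ) - γ)

theorem sum_Lcoef_eq_gamma_ratio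
    (γ : ℝ) (hγpos : 0 < γ) (hγnotint : ∀ n : ℤ, γ ≠ (n : ℝ)) (i : ℕ) :
    ∑ j ∈ Finset.range (i + 1), Lcoef γ i j =
      ((2 * i).factorial : ℝ) / (i.factorial : ℝ) *
        (Real.Gamma (1 - γ) / Real.Gamma (1 - γ + (i : ℝ))) := by
  have hne : ∀ k : ℕ, (k : ℝ) - γ ≠ 0 := by
    intro k h
    exact hγnotint k (by push_cast; linarith)
  have hPne : ∀ j : ℕ, (∏ k ∈ Finset.Icc 1 j, ((k : ℝ) - γ)) ≠ 0 := fun j =>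
    Finset.prod_ne_zero_iff.mpr (fun k _ => hne k)
  have hfne : (i.factorial : ℝ) ≠ 0 := Nat.cast_ne_zero.mpr (Nat.factorial_ne_zero i)
  set D : ℝ := ∏ k ∈ Finset.Icc 1 i, ((k : ℝ) - γ) with hD
  -- key: each term times D
  have key : ∀ j ∈ Finset.range (i+1),
      Lcoef γ i j * D = (i.choose j : ℝ) * ff ((i : ℝ) + γ) j * ff ((i : ℝ) - γ) (i - j) := by
    intro j hj
    have hji : j ≤ i := by simpa [Nat.lt_succ_iff] using hj
    have hsplit : D = (∏ k ∈ Finset.Icc 1 j, ((k : ℝ) - γ)) * ff ((i : ℝ) - γ) (i - j) := by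
      rw [ff_Ioc γ i (i - j) (by omega)]
      have : i - (i - j) = j := by omega
      rw [this, hD]
      have e0 : Finset.Icc 1 i = Finset.Ioc 0 i := rfl
      have e1 : Finset.Icc 1 j = Finset.Ioc 0 j := rfl
      rw [e0, e1, Finset.prod_Ioc_consecutive _ (Nat.zero_le j) hji]
    rw [hsplit, Lcoef]
    have hffx : (∏ k ∈ Finset.range j, ((i : ℝ) + γ - (k : ℝ))) = ff ((i : ℝ) + γ) j := rfl
    rw [hffx, ← mul_assoc, div_mul_cancel₀ _ (hPne j)]
  have hsum : (∑ j ∈ Finset.range (i+1), Lcoef γ i j) * D = ((2 * i).factorial : ℝ) / (i.factorial : ℝ) := by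
    rw [Finset.sum_mul, Finset.sum_congr rfl key, vdm]
    have hxy : (i : ℝ) + γ + ((i : ℝ) - γ) = ((2 * i : ℕ) : ℝ) := by push_cast; ring
    rw [hxy]
    have := ff_fact (2 * i) i (by omega)
    have h2 : 2 * i - i = i := by omega
    rw [h2] at this
    push_cast at this ⊢
    rw [eq_div_iff hfne]
    linarith [this]
  have hGne : Real.Gamma (1 - γ) ≠ 0 := by
    apply Real.Gamma_ne_zero
    intro m h
    exact hγnotint (1 + m) (by push_cast; linarith)
  rw [gamma_prod γ hγnotint i, ← hD]
  have hDne : D ≠ 0 := hPne i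
  have hS : ∑ j ∈ Finset.range (i+1), Lcoef γ i j = ((2 * i).factorial : ℝ) / (i.factorial : ℝ) / D := by
    rw [eq_div_iff hDne]; exact hsum
  rw [hS]
  field_simp
end
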